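/- arXiv:2311.07938 — 5 statements merged into one kernel-verified Lean document; each statement's English description precedes it below -/
import Mathlib

section
/- Let V, Q : ℝⁿ → ℝ≥0 be continuous, positive definite, radially unbounded functions. Then there exists a strictly increasing continuous function ζ : ℝ≥0 → ℝ≥0 with ζ(0) = 0 and ζ(s) → ∞ as s → ∞ (i.e., ζ ∈ K∞) such that Q(x) ≥ ζ(V(x)) for all x ∈ ℝⁿ. -/
/-!
Let `g s = min s (inf {Q x | s ≤ V x})`, so that `g (V x) ≤ Q x`. It is nondecreasing, positive
for `s > 0` because `Q` has a positive minimum on the compact set `{s ≤ V, Q ≤ 1}`, and tends to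
`∞` because `V` is bounded on each compact sublevel set of `Q`. Its running average
`ζ s = (∫₀ˢ g) / s` lies below `g`, is continuous (also at `0`, as `g s ≤ s`), and is strictly
increasing because `g t ≤ t < g s` for small `t`.
-/

open Filter Set MeasureTheory intervalIntegral Topology

def IsClassKInfty (ζ : ℝ → ℝ) : Prop :=
  ContinuousOn ζ (Ici 0) ∧ StrictMonoOn ζ (Ici 0) ∧ ζ 0 = 0 ∧ (∀ s, 0 ≤ s → 0 ≤ ζ s) ∧
    Tendsto ζ atTop atTop

section RunningAverage

variable {h : ℝ → ℝ} {a b s : ℝ}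

/-- Pitfall: by the convention `x / 0 = 0`, `runningAverage h 0 = 0`. -/
noncomputable def runningAverage (h : ℝ → ℝ) (s : ℝ) : ℝ := (∫ t in 0..s, h t) / s

lemma Monotone.intervalIntegral_le_mul (hh : Monotone h) (hab : a ≤ b) :
    ∫ t in a..b, h t ≤ (b - a) * h b := by
  simpa using integral_mono_on (μ := volume) hab hh.intervalIntegrable intervalIntegrable_const
    fun t ht => hh ht.2

lemma Monotone.mul_le_intervalIntegral (hh : Monotone h) (hab : a ≤ b) :
    (b - a) * h a ≤ ∫ t in a..b, h t := by
  simpa using integral_mono_on (μ := volume) hab intervalIntegrable_const hh.intervalIntegrable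
    fun t ht => hh ht.1

lemma Monotone.mul_le_intervalIntegral_zero (hh : Monotone h) (h0 : h 0 = 0) (ha : 0 ≤ a)
    (has : a ≤ s) : (s - a) * h a ≤ ∫ t in 0..s, h t := by
  have hnonneg : 0 ≤ ∫ t in 0..a, h t := by simpa [h0] using hh.mul_le_intervalIntegral ha
  rw [← integral_add_adjacent_intervals hh.intervalIntegrable hh.intervalIntegrable]
  linarith [hh.mul_le_intervalIntegral has]

lemma Monotone.intervalIntegral_lt_mul (hh : Monotone h) (hid : ∀ t, 0 ≤ t → h t ≤ t)
    (hpos : ∀ t, 0 < t → 0 < h t) (ha : 0 < a) : ∫ t in 0..a, h t < a * h a := by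
  set c := min a (h a) / 2 with hc_def
  have hmin : 0 < min a (h a) := lt_min ha (hpos a ha)
  have hc : 0 < c := half_pos hmin
  have hca : c < a := by linarith [min_le_left a (h a)]
  have hcha : c < h a := by linarith [min_le_right a (h a)]
  have hinit : ∫ t in 0..c, h t ≤ c * c := by
    nlinarith [hh.intervalIntegral_le_mul hc.le, hid c hc.le]
  rw [← integral_add_adjacent_intervals (b := c) hh.intervalIntegrable hh.intervalIntegrable]
  nlinarith [hh.intervalIntegral_le_mul hca.le]

lemma runningAverage_le (hh : Monotone h) (h0 : h 0 = 0) (hs : 0 ≤ s) :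
    runningAverage h s ≤ h s := by
  rcases hs.eq_or_lt with rfl | hs
  · simp [runningAverage, h0]
  · rw [runningAverage, div_le_iff₀ hs]
    simpa [mul_comm] using hh.intervalIntegral_le_mul hs.le

lemma runningAverage_nonneg (hh : Monotone h) (h0 : h 0 = 0) (hs : 0 ≤ s) :
    0 ≤ runningAverage h s :=
  div_nonneg (by simpa [h0] using hh.mul_le_intervalIntegral_zero h0 le_rfl hs) hs

lemma continuousOn_runningAverage (hh : Monotone h) (h0 : h 0 = 0)
    (hid : ∀ t, 0 ≤ t → h t ≤ t) : ContinuousOn (runningAverage h) (Ici 0) := by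
  intro s (hs : 0 ≤ s)
  rcases hs.eq_or_lt with rfl | hs
  · have hid0 : Tendsto id (𝓝[Ici 0] (0 : ℝ)) (𝓝 0) := nhdsWithin_le_nhds
    rw [ContinuousWithinAt, show runningAverage h 0 = 0 by simp [runningAverage]]
    refine tendsto_of_tendsto_of_tendsto_of_le_of_le' tendsto_const_nhds hid0 ?_ ?_
    · filter_upwards [self_mem_nhdsWithin] with t ht
      exact runningAverage_nonneg hh h0 ht
    · filter_upwards [self_mem_nhdsWithin] with t ht
      exact (runningAverage_le hh h0 ht).trans (hid t ht)
  · exact ((continuous_primitive (fun _ _ => hh.intervalIntegrable) 0).continuousAt.div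
      continuousAt_id hs.ne').continuousWithinAt

lemma strictMonoOn_runningAverage (hh : Monotone h) (h0 : h 0 = 0)
    (hid : ∀ t, 0 ≤ t → h t ≤ t) (hpos : ∀ t, 0 < t → 0 < h t) :
    StrictMonoOn (runningAverage h) (Ici 0) := by
  intro a (ha : 0 ≤ a) b _ hab
  have hb : 0 < b := ha.trans_lt hab
  rcases ha.eq_or_lt with rfl | ha
  · have hlower := hh.mul_le_intervalIntegral_zero h0 (half_pos hb).le (half_le_self hb.le)
    have hhalf := hpos _ (half_pos hb)
    simp only [runningAverage, div_zero]
    exact div_pos (by nlinarith) hb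
  · rw [runningAverage, runningAverage, div_lt_div_iff₀ ha hb,
      ← integral_add_adjacent_intervals (a := 0) (b := a) (c := b) hh.intervalIntegrable
        hh.intervalIntegrable]
    nlinarith [hh.intervalIntegral_lt_mul hid hpos ha, hh.mul_le_intervalIntegral hab.le]

lemma tendsto_runningAverage (hh : Monotone h) (h0 : h 0 = 0) (htop : Tendsto h atTop atTop) :
    Tendsto (runningAverage h) atTop atTop := by
  have hhalf : Tendsto (fun s => h (s / 2) / 2) atTop atTop :=
    (htop.comp (tendsto_id.atTop_div_const two_pos)).atTop_div_const two_pos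
  refine tendsto_atTop_mono' atTop ?_ hhalf
  filter_upwards [eventually_gt_atTop 0] with s hs
  rw [runningAverage, le_div_iff₀ hs]
  nlinarith [hh.mul_le_intervalIntegral_zero h0 (half_pos hs).le (half_le_self hs.le)]

lemma isClassKInfty_runningAverage (hh : Monotone h) (h0 : h 0 = 0)
    (hid : ∀ t, 0 ≤ t → h t ≤ t) (hpos : ∀ t, 0 < t → 0 < h t)
    (htop : Tendsto h atTop atTop) : IsClassKInfty (runningAverage h) :=
  ⟨continuousOn_runningAverage hh h0 hid, strictMonoOn_runningAverage hh h0 hid hpos,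
    by simp [runningAverage], fun _ => runningAverage_nonneg hh h0,
    tendsto_runningAverage hh h0 htop⟩

end RunningAverage

section LevelSets

variable {X : Type*} {V Q : X → ℝ} {s b : ℝ}

/-- The cap by `Ici s` avoids the junk value `sInf ∅ = 0` when no `x` has `s ≤ V x`. -/
noncomputable def cappedLevelInf (V Q : X → ℝ) (s : ℝ) : ℝ := sInf (Q '' {x | s ≤ V x} ∪ Ici s)

lemma bddBelow_cappedLevelInf_set (hQ : ∀ x, 0 ≤ Q x) (s : ℝ) :
    BddBelow (Q '' {x | s ≤ V x} ∪ Ici s) := by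
  refine ⟨min 0 s, ?_⟩
  rintro _ (⟨x, -, rfl⟩ | ht)
  exacts [(min_le_left _ _).trans (hQ x), (min_le_right _ _).trans ht]

lemma cappedLevelInf_le (hQ : ∀ x, 0 ≤ Q x) {x : X} (hx : s ≤ V x) :
    cappedLevelInf V Q s ≤ Q x :=
  csInf_le (bddBelow_cappedLevelInf_set hQ s) (.inl ⟨x, hx, rfl⟩)

lemma cappedLevelInf_le_self (hQ : ∀ x, 0 ≤ Q x) (s : ℝ) : cappedLevelInf V Q s ≤ s :=
  csInf_le (bddBelow_cappedLevelInf_set hQ s) (.inr self_mem_Ici)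

lemma le_cappedLevelInf (hbs : b ≤ s) (hbQ : ∀ x, s ≤ V x → b ≤ Q x) :
    b ≤ cappedLevelInf V Q s := by
  refine le_csInf ⟨s, .inr self_mem_Ici⟩ ?_
  rintro _ (⟨x, hx, rfl⟩ | ht)
  exacts [hbQ x hx, hbs.trans ht]

lemma monotone_cappedLevelInf (hQ : ∀ x, 0 ≤ Q x) : Monotone (cappedLevelInf V Q) :=
  fun s _ hs => le_cappedLevelInf (cappedLevelInf_le_self hQ s |>.trans hs)
    fun _ hx => cappedLevelInf_le hQ (hs.trans hx)

lemma cappedLevelInf_zero (hQ : ∀ x, 0 ≤ Q x) : cappedLevelInf V Q 0 = 0 :=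
  (cappedLevelInf_le_self hQ 0).antisymm (le_cappedLevelInf le_rfl fun x _ => hQ x)

lemma cappedLevelInf_pos (hpos : ∃ c > 0, ∀ x, s ≤ V x → c ≤ Q x) (hs : 0 < s) :
    0 < cappedLevelInf V Q s := by
  obtain ⟨c, hc, hcQ⟩ := hpos
  exact (lt_min hc hs).trans_le <|
    le_cappedLevelInf (min_le_right _ _) fun x hx => (min_le_left _ _).trans (hcQ x hx)

lemma tendsto_cappedLevelInf (htop : ∀ C, ∃ S, ∀ x, S ≤ V x → C ≤ Q x) :
    Tendsto (cappedLevelInf V Q) atTop atTop := by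
  refine tendsto_atTop_atTop.2 fun C => ?_
  obtain ⟨S, hS⟩ := htop C
  exact ⟨max S C, fun s hs => le_cappedLevelInf ((le_max_right _ _).trans hs)
    fun x hx => hS x ((le_max_left _ _).trans (hs.trans hx))⟩

theorem exists_isClassKInfty_comp_le (hV : ∀ x, 0 ≤ V x) (hQ : ∀ x, 0 ≤ Q x)
    (hpos : ∀ s > 0, ∃ c > 0, ∀ x, s ≤ V x → c ≤ Q x)
    (htop : ∀ C, ∃ S, ∀ x, S ≤ V x → C ≤ Q x) :
    ∃ ζ, IsClassKInfty ζ ∧ ∀ x, ζ (V x) ≤ Q x := by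
  have hmono := monotone_cappedLevelInf (V := V) hQ
  have h0 := cappedLevelInf_zero (V := V) hQ
  refine ⟨runningAverage (cappedLevelInf V Q),
    isClassKInfty_runningAverage hmono h0 (fun t _ => cappedLevelInf_le_self hQ t)
      (fun t ht => cappedLevelInf_pos (hpos t ht) ht) (tendsto_cappedLevelInf htop),
    fun x => ?_⟩
  exact (runningAverage_le hmono h0 (hV x)).trans (cappedLevelInf_le hQ le_rfl)

variable [TopologicalSpace X]

lemma exists_pos_forall_le_on_superlevel (hV : Continuous V) (hQ : Continuous Q)
    (hQrad : ∀ M, IsCompact {x | Q x ≤ M}) (hQpos : ∀ x, 0 < V x → 0 < Q x) (hs : 0 < s) :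
    ∃ c > 0, ∀ x, s ≤ V x → c ≤ Q x := by
  have hK : IsCompact ({x | Q x ≤ 1} ∩ {x | s ≤ V x}) :=
    (hQrad 1).inter_right (isClosed_le continuous_const hV)
  obtain ⟨c, hc, hcQ⟩ := hK.exists_forall_le' hQ.continuousOn
    fun x hx => hQpos x (hs.trans_le hx.2)
  refine ⟨min c 1, lt_min hc one_pos, fun x hx => ?_⟩
  rcases le_or_gt (Q x) 1 with hx1 | hx1
  exacts [(min_le_left _ _).trans (hcQ x ⟨hx1, hx⟩), (min_le_right _ _).trans hx1.le]

lemma exists_forall_le_on_superlevel (hV : Continuous V) (hQrad : ∀ M, IsCompact {x | Q x ≤ M})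
    (C : ℝ) : ∃ S, ∀ x, S ≤ V x → C ≤ Q x := by
  obtain ⟨S, hS⟩ := (hQrad C).bddAbove_image hV.continuousOn
  refine ⟨S + 1, fun x hx => ?_⟩
  by_contra! hQx
  linarith [hS ⟨x, hQx.le, rfl⟩]

end LevelSets

theorem stmt_6_general (n : ℕ) (V Q : (Fin n → ℝ) → ℝ)
    (hVcont : Continuous V) (hQcont : Continuous Q)
    (hVnonneg : ∀ x, 0 ≤ V x) (hQnonneg : ∀ x, 0 ≤ Q x)
    (hV0 : V 0 = 0)
    (hQpos : ∀ x, x ≠ 0 → 0 < Q x)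
    (hQrad : ∀ M : ℝ, IsCompact {x | Q x ≤ M}) :
    ∃ ζ : ℝ → ℝ, ContinuousOn ζ (Set.Ici 0) ∧ StrictMonoOn ζ (Set.Ici 0) ∧
      ζ 0 = 0 ∧ (∀ s, 0 ≤ s → 0 ≤ ζ s) ∧
      Filter.Tendsto ζ Filter.atTop Filter.atTop ∧
      ∀ x, ζ (V x) ≤ Q x := by
  have hQpos_of_V : ∀ x, 0 < V x → 0 < Q x := fun x hx =>
    hQpos x fun hx0 => by simp [hx0, hV0] at hx
  obtain ⟨ζ, ⟨hcont, hmono, h0, hnonneg, htop⟩, hle⟩ :=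
    exists_isClassKInfty_comp_le hVnonneg hQnonneg
      (fun _ hs => exists_pos_forall_le_on_superlevel hVcont hQcont hQrad hQpos_of_V hs)
      (exists_forall_le_on_superlevel hVcont hQrad)
  exact ⟨ζ, hcont, hmono, h0, hnonneg, htop, hle⟩

/-- Proposition 2.2 used in the proof of Theorem 1 (inequality (4.6)): for
continuous, positive definite, radially unbounded `V, Q : ℝⁿ → ℝ≥0` there
exists a class-`K∞` function `ζ` with `Q(x) ≥ ζ(V(x))` for all `x`. -/
theorem stmt_6 (n : ℕ) (V Q : (Fin n → ℝ) → ℝ)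
    (hVcont : Continuous V) (hQcont : Continuous Q)
    (hVnonneg : ∀ x, 0 ≤ V x) (hQnonneg : ∀ x, 0 ≤ Q x)
    (hVpos : ∀ x, x ≠ 0 → 0 < V x) (hV0 : V 0 = 0)
    (hQpos : ∀ x, x ≠ 0 → 0 < Q x) (hQ0 : Q 0 = 0)
    (hVrad : ∀ M : ℝ, IsCompact {x | V x ≤ M})
    (hQrad : ∀ M : ℝ, IsCompact {x | Q x ≤ M}) :
    ∃ ζ : ℝ → ℝ, ContinuousOn ζ (Set.Ici 0) ∧ StrictMonoOn ζ (Set.Ici 0) ∧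
      ζ 0 = 0 ∧ (∀ s, 0 ≤ s → 0 ≤ ζ s) ∧
      Filter.Tendsto ζ Filter.atTop Filter.atTop ∧
      ∀ x, ζ (V x) ≤ Q x :=
  stmt_6_general n V Q hVcont hQcont hVnonneg hQnonneg hV0 hQpos hQrad
end

section
/- Let Γ > 0, r > 0, and let x : [0,∞) → ℝⁿ be a bounded solution with V ∘ x continuously differentiable such that the function g(t) := Γ·(V(x(t)) - r)⁺ is uniformly continuous, its antiderivative is bounded above, and g ≥ 0. Then limsup_{t→∞} V(x(t)) ≤ r. -/
/-!
Since `g ≥ 0`, the antiderivative `G` is nondecreasing, and being bounded above it converges.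
Then `(G (t + δ) - G t) / δ → 0`, and by the mean value theorem this quotient is a value of `g`
within distance `δ` of `t`; uniform continuity of `g` turns this into `g t → 0` (Barbălat's lemma).
Finally `g t = Γ·(V(x t) - r)⁺ → 0` forces `V (x t) ≤ r + ε` eventually for every `ε > 0`.
-/

open Filter Set Topology

theorem exists_tendsto_atTop_of_monotoneOn_Ici {G : ℝ → ℝ} {a : ℝ}
    (hmono : MonotoneOn G (Ici a)) (hbdd : BddAbove (G '' Ici a)) :
    ∃ L, Tendsto G atTop (𝓝 L) := by
  have hF : Monotone fun t => G (max a t) := fun s t hst =>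
    hmono (le_max_left a s) (le_max_left a t) (max_le_max_left a hst)
  have hFbdd : BddAbove (range fun t => G (max a t)) :=
    hbdd.mono (range_subset_iff.2 fun t => mem_image_of_mem G (le_max_left a t))
  refine ⟨_, (tendsto_atTop_ciSup hF hFbdd).congr' ?_⟩
  filter_upwards [eventually_ge_atTop a] with t ht
  rw [max_eq_right ht]

theorem tendsto_zero_of_hasDerivAt_of_tendsto_of_uniformContinuousOn {g G : ℝ → ℝ} {a L : ℝ}
    (hG : ∀ t, a ≤ t → HasDerivAt G (g t) t) (hlim : Tendsto G atTop (𝓝 L))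
    (huc : UniformContinuousOn g (Ici a)) :
    Tendsto g atTop (𝓝 0) := by
  rw [Metric.tendsto_atTop]
  intro ε hε
  obtain ⟨δ, hδ, hgδ⟩ := Metric.uniformContinuousOn_iff.1 huc (ε / 2) (half_pos hε)
  have hincrement : Tendsto (fun t => G (t + δ) - G t) atTop (𝓝 0) := by
    simpa using (hlim.comp (tendsto_atTop_add_const_right _ δ tendsto_id)).sub hlim
  obtain ⟨N, hN⟩ := Metric.tendsto_atTop.1 hincrement (ε / 2 * δ) (by positivity)
  refine ⟨max N a, fun t ht => ?_⟩
  have hNt : N ≤ t := le_of_max_le_left ht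
  have hat : a ≤ t := le_of_max_le_right ht
  obtain ⟨ξ, hξ, hslope⟩ := exists_hasDerivAt_eq_slope G g (lt_add_of_pos_right t hδ)
    (fun s hs => (hG s (hat.trans hs.1)).continuousAt.continuousWithinAt)
    (fun s hs => hG s (hat.trans hs.1.le))
  have hclose : |g ξ - g t| < ε / 2 := by
    refine hgδ ξ (hat.trans hξ.1.le) t hat ?_
    rw [Real.dist_eq, abs_of_pos (sub_pos.2 hξ.1)]
    linarith [hξ.2]
  have hsmall : |g ξ| < ε / 2 := by
    rw [hslope, add_sub_cancel_left, abs_div, abs_of_pos hδ, div_lt_iff₀ hδ]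
    simpa [Real.dist_eq] using hN t hNt
  rw [Real.dist_eq, sub_zero]
  calc |g t| ≤ |g ξ| + |g ξ - g t| := by
        linarith [abs_sub_abs_le_abs_sub (g t) (g ξ), abs_sub_comm (g t) (g ξ)]
    _ < ε := by linarith

theorem limsup_le_of_tendsto_max_sub_zero {ι : Type*} {l : Filter ι} {f : ι → ℝ} {r : ℝ}
    (hf : l.IsCoboundedUnder (· ≤ ·) f) (h : Tendsto (fun i => max (f i - r) 0) l (𝓝 0)) :
    limsup f l ≤ r := by
  refine le_of_forall_pos_le_add fun ε hε => limsup_le_of_le hf ?_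
  filter_upwards [h.eventually (gt_mem_nhds hε)] with i hi
  linarith [le_max_left (f i - r) 0]

theorem stmt_8_general (n : ℕ) (Γ r : ℝ) (hΓ : 0 < Γ)
    (V : (Fin n → ℝ) → ℝ) (hVnonneg : ∀ x, 0 ≤ V x)
    (x : ℝ → (Fin n → ℝ))
    (g : ℝ → ℝ) (hg : ∀ t, g t = Γ * max (V (x t) - r) 0)
    (huc : UniformContinuousOn g (Set.Ici (0 : ℝ)))
    (G : ℝ → ℝ) (hG : ∀ t, 0 ≤ t → HasDerivAt G (g t) t)
    (hGbdd : ∃ M : ℝ, ∀ t, 0 ≤ t → G t ≤ M)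
    (hgnonneg : ∀ t, 0 ≤ g t) :
    Filter.limsup (fun t => V (x t)) Filter.atTop ≤ r := by
  obtain ⟨M, hM⟩ := hGbdd
  have hmono : MonotoneOn G (Ici 0) := by
    refine monotoneOn_of_hasDerivWithinAt_nonneg (convex_Ici 0)
      (fun t ht => (hG t ht).continuousAt.continuousWithinAt)
      (fun t ht => (hG t (interior_subset ht)).hasDerivWithinAt) fun t _ => hgnonneg t
  obtain ⟨L, hL⟩ := exists_tendsto_atTop_of_monotoneOn_Ici hmono
    ⟨M, forall_mem_image.2 fun t ht => hM t ht⟩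
  have hg0 := tendsto_zero_of_hasDerivAt_of_tendsto_of_uniformContinuousOn hG hL huc
  refine limsup_le_of_tendsto_max_sub_zero
    (isCoboundedUnder_le_of_le atTop fun t => hVnonneg (x t)) ?_
  simpa [hg, hΓ.ne'] using hg0.const_mul Γ⁻¹

/-- The deadzone mechanism of the DADS controller (inequality (2.14)):
if `g(t) = Γ·(V(x(t)) - r)⁺` is uniformly continuous, nonnegative, and has a
bounded antiderivative, then `limsup_{t→∞} V(x(t)) ≤ r`. -/
theorem stmt_8 (n : ℕ) (Γ r : ℝ) (hΓ : 0 < Γ) (hr : 0 < r)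
    (V : (Fin n → ℝ) → ℝ) (hVcont : Continuous V) (hVnonneg : ∀ x, 0 ≤ V x)
    (x : ℝ → (Fin n → ℝ)) (hxbdd : ∃ M : ℝ, ∀ t, 0 ≤ t → ‖x t‖ ≤ M)
    (hC1 : ContDiffOn ℝ 1 (fun t => V (x t)) (Set.Ici (0 : ℝ)))
    (g : ℝ → ℝ) (hg : ∀ t, g t = Γ * max (V (x t) - r) 0)
    (huc : UniformContinuousOn g (Set.Ici (0 : ℝ)))
    (G : ℝ → ℝ) (hG : ∀ t, 0 ≤ t → HasDerivAt G (g t) t)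
    (hGbdd : ∃ M : ℝ, ∀ t, 0 ≤ t → G t ≤ M)
    (hgnonneg : ∀ t, 0 ≤ g t) :
    Filter.limsup (fun t => V (x t)) Filter.atTop ≤ r :=
  stmt_8_general n Γ r hΓ V hVnonneg x g hg huc G hG hGbdd hgnonneg
end

section
/- Let K₁, K₂, K₃, K₄, M, σ > 0 and θ > K₁. Then the system of equations (K₁ - θ + K₂ρ²)x + (K₃ + K₄ρ²)x³ = 0, Mx² = σρ has a solution (x, ρ) with x ≠ 0 and ρ > 0; specifically x = ±√(σρ/M) where ρ is the unique positive root of (K₄σ/M)ρ³ + K₂ρ² + (K₃σ/M)ρ = θ - K₁. -/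
/-- Example 2: for `θ > K₁` the equilibrium equations (3.9) admit a solution
with `x ≠ 0`, `ρ > 0`, with `x² = σρ/M` and `ρ` the unique positive root of the
cubic `(K₄σ/M)ρ³ + K₂ρ² + (K₃σ/M)ρ = θ - K₁`. -/
theorem stmt_13 (K₁ K₂ K₃ K₄ M σ θ : ℝ)
    (h1 : 0 < K₁) (h2 : 0 < K₂) (h3 : 0 < K₃) (h4 : 0 < K₄)
    (hM : 0 < M) (hσ : 0 < σ) (hθ : K₁ < θ) :
    ∃ x ρ : ℝ, x ≠ 0 ∧ 0 < ρ ∧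
      (K₁ - θ + K₂ * ρ ^ 2) * x + (K₃ + K₄ * ρ ^ 2) * x ^ 3 = 0 ∧
      M * x ^ 2 = σ * ρ ∧
      x ^ 2 = σ * ρ / M ∧
      (K₄ * σ / M) * ρ ^ 3 + K₂ * ρ ^ 2 + (K₃ * σ / M) * ρ = θ - K₁ ∧
      (∀ ρ' : ℝ, 0 < ρ' →
        (K₄ * σ / M) * ρ' ^ 3 + K₂ * ρ' ^ 2 + (K₃ * σ / M) * ρ' = θ - K₁ →
        ρ' = ρ) := by
  set a := K₄ * σ / M with ha
  set b := K₃ * σ / M with hb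
  have haa : 0 < a := by positivity
  have hbb : 0 < b := by positivity
  set f : ℝ → ℝ := fun r => a * r ^ 3 + K₂ * r ^ 2 + b * r with hf
  have hcont : Continuous f := by continuity
  set R : ℝ := (θ - K₁) / b with hR
  have hR0 : 0 < R := div_pos (by linarith) hbb
  have hbr : b * R = θ - K₁ := by
    rw [hR, mul_div_cancel₀ _ hbb.ne']
  have hfR : θ - K₁ ≤ f R := by
    show θ - K₁ ≤ a * R ^ 3 + K₂ * R ^ 2 + b * R
    nlinarith [pow_pos hR0 3, pow_pos hR0 2]
  have hf0 : f 0 = 0 := by simp [hf]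
  have := intermediate_value_Icc (le_of_lt hR0) (hcont.continuousOn (s := Set.Icc 0 R))
  have hmem : (θ - K₁) ∈ Set.Icc (f 0) (f R) := by
    constructor
    · rw [hf0]; linarith
    · exact hfR
  obtain ⟨ρ, hρmem, hρeq⟩ := this hmem
  have hρ0 : 0 ≤ ρ := hρmem.1
  have hρpos : 0 < ρ := by
    rcases lt_or_eq_of_le hρ0 with h | h
    · exact h
    · exfalso; rw [← h] at hρeq; rw [hf0] at hρeq; linarith
  have hcubic : a * ρ ^ 3 + K₂ * ρ ^ 2 + b * ρ = θ - K₁ := hρeq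
  set x : ℝ := Real.sqrt (σ * ρ / M) with hx
  have hxsq : x ^ 2 = σ * ρ / M := by
    rw [hx, sq, Real.mul_self_sqrt (by positivity)]
  have hxpos : 0 < x := Real.sqrt_pos.mpr (by positivity)
  refine ⟨x, ρ, ne_of_gt hxpos, hρpos, ?_, ?_, hxsq, hcubic, ?_⟩
  · have key : (K₁ - θ + K₂ * ρ ^ 2) + (K₃ + K₄ * ρ ^ 2) * x ^ 2 = 0 := by
      rw [hxsq]
      have hc' : (K₄ * σ / M) * ρ ^ 3 + K₂ * ρ ^ 2 + (K₃ * σ / M) * ρ = θ - K₁ :=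
        hcubic
      field_simp at hc' ⊢
      linear_combination hc'
    have : (K₁ - θ + K₂ * ρ ^ 2) * x + (K₃ + K₄ * ρ ^ 2) * x ^ 3
        = ((K₁ - θ + K₂ * ρ ^ 2) + (K₃ + K₄ * ρ ^ 2) * x ^ 2) * x := by ring
    rw [this, key, zero_mul]
  · rw [hxsq]; field_simp
  · intro ρ' hρ' heq
    by_contra hne
    rcases lt_or_gt_of_ne hne with h | h
    · have e1 : 0 < a * ((ρ - ρ') * (ρ ^ 2 + ρ * ρ' + ρ' ^ 2)) :=
        mul_pos haa (mul_pos (by linarith) (by positivity))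
      have e2 : 0 < K₂ * ((ρ - ρ') * (ρ + ρ')) :=
        mul_pos h2 (mul_pos (by linarith) (by positivity))
      have e3 : 0 < b * (ρ - ρ') := mul_pos hbb (by linarith)
      nlinarith [hcubic, heq]
    · have e1 : 0 < a * ((ρ' - ρ) * (ρ ^ 2 + ρ * ρ' + ρ' ^ 2)) :=
        mul_pos haa (mul_pos (by linarith) (by positivity))
      have e2 : 0 < K₂ * ((ρ' - ρ) * (ρ + ρ')) :=
        mul_pos h2 (mul_pos (by linarith) (by positivity))
      have e3 : 0 < b * (ρ' - ρ) := mul_pos hbb (by linarith)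
      nlinarith [hcubic, heq]
end

section
/- Let α > 0, θ = 1 + α, T ≥ 0, and let x₂, x₃ : [0,∞) → ℝ be absolutely continuous with x₂'(t) = θ + x₃(t) for a.e. t ≥ 0, and suppose x₂(t)² + x₃(t)² ≤ α² for all t ≥ T. Then a contradiction follows; i.e., no such functions exist. -/
/-- Core step of Example 4: with `θ = 1 + α`, absolutely continuous `x₂, x₃`
with `x₂' = θ + x₃` and `x₂² + x₃² ≤ α²` on `[T,∞)` cannot exist. -/
theorem stmt_16 (α T : ℝ) (hα : 0 < α) (hT : 0 ≤ T) (θ : ℝ) (hθ : θ = 1 + α)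
    (x₂ x₃ : ℝ → ℝ) (hx₃cont : Continuous x₃)
    (hAC : ∀ t : ℝ, 0 ≤ t → x₂ t = x₂ 0 + ∫ s in (0 : ℝ)..t, (θ + x₃ s))
    (hbd : ∀ t : ℝ, T ≤ t → (x₂ t) ^ 2 + (x₃ t) ^ 2 ≤ α ^ 2) :
    False := by
  -- bounds on x₂ and x₃ from the square bound
  have hb : ∀ t, T ≤ t → |x₂ t| ≤ α ∧ |x₃ t| ≤ α := by
    intro t ht
    have h := hbd t ht
    have h2 : (x₂ t) ^ 2 ≤ α ^ 2 := by nlinarith [sq_nonneg (x₃ t)]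
    have h3 : (x₃ t) ^ 2 ≤ α ^ 2 := by nlinarith [sq_nonneg (x₂ t)]
    constructor
    · exact abs_le_of_sq_le_sq' (by nlinarith) hα.le |>.2 |> abs_le.mpr ∘ (fun h => ⟨(abs_le_of_sq_le_sq' (by nlinarith) hα.le).1, h⟩)
    · exact abs_le.mpr ⟨(abs_le_of_sq_le_sq' (by nlinarith) hα.le).1, (abs_le_of_sq_le_sq' (by nlinarith) hα.le).2⟩
  set t₁ : ℝ := T + 2 * α + 1 with ht₁
  have hTt : T ≤ t₁ := by nlinarith
  have hcont : Continuous (fun s => θ + x₃ s) := continuous_const.add hx₃cont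
  have hint : ∀ a b : ℝ, IntervalIntegrable (fun s => θ + x₃ s) MeasureTheory.volume a b :=
    fun a b => hcont.intervalIntegrable a b
  have hdiff : x₂ t₁ - x₂ T = ∫ s in T..t₁, (θ + x₃ s) := by
    rw [hAC t₁ (le_trans hT hTt), hAC T hT]
    rw [← intervalIntegral.integral_add_adjacent_intervals (hint 0 T) (hint T t₁)]
    ring
  have hlow : (t₁ - T) * 1 ≤ ∫ s in T..t₁, (θ + x₃ s) := by
    have : ∫ s in T..t₁, (1 : ℝ) ≤ ∫ s in T..t₁, (θ + x₃ s) := by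
      apply intervalIntegral.integral_mono_on hTt (intervalIntegrable_const) (hint T t₁)
      intro s hs
      have := (hb s hs.1).2
      have : -α ≤ x₃ s := (abs_le.mp this).1
      nlinarith
    simpa using this
  have h1 := (abs_le.mp (hb t₁ hTt).1).2
  have h2 := (abs_le.mp (hb T le_rfl).1).1
  nlinarith
end

section
/- Let ζ : ℝ≥0 → ℝ≥0 be continuous, strictly increasing, unbounded with ζ(0) = 0, let P ≥ 0, and let y : [0,T] → ℝ≥0 be absolutely continuous such that y'(t) ≤ -(3/4)ζ(y(t)) + (1/2)ζ(P) for a.e. t ∈ [0,T]. Then y'(t) ≤ -(1/4)ζ(y(t)) for a.e. t with y(t) ≥ P, and consequently y(t) ≤ max(y(0), P) for all t ∈ [0,T]. -/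
/-!
Above the level `P`, monotonicity of `ζ` gives `ζ P ≤ ζ (y t)`, so the forcing term `(1/2) ζ P` is
absorbed by `(3/4) ζ (y t)`, leaving `y' ≤ -(1/4) ζ (y) ≤ 0`. A function that cannot increase while
it is above `P` never rises above `max (y 0) P`.
-/

open Set Filter Topology

/-- Fencing `f` by `max (f a) M + ε * (1 + (x - a))`, whose slope `ε > 0` beats `f' ≤ 0` at every
contact point, and letting `ε → 0`. -/
theorem image_le_max_of_deriv_right_nonpos {f f' : ℝ → ℝ} {a b M : ℝ}
    (hf : ContinuousOn f (Icc a b))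
    (hf' : ∀ x ∈ Ico a b, HasDerivWithinAt f (f' x) (Ici x) x)
    (hnonpos : ∀ x ∈ Ico a b, M < f x → f' x ≤ 0) :
    ∀ x ∈ Icc a b, f x ≤ max (f a) M := by
  intro x hx
  set M' := max (f a) M
  have fenced : ∀ ε > 0, f x ≤ M' + ε * (1 + (x - a)) := by
    intro ε hε
    refine image_le_of_deriv_right_lt_deriv_boundary hf hf'
      (B := fun z => M' + ε * (1 + (z - a))) (B' := fun _ => ε) ?_ ?_ ?_ hx
    · simp only [sub_self, add_zero, mul_one]
      linarith [le_max_left (f a) M]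
    · intro z
      simpa using ((hasDerivAt_id z).sub_const a).const_add 1 |>.const_mul ε |>.const_add M'
    · intro z hz hfz
      have hM : M < f z := by
        rw [hfz]
        nlinarith [le_max_right (f a) M, hz.1]
      linarith [hnonpos z hz hM]
  have hlim : Tendsto (fun ε => M' + ε * (1 + (x - a))) (𝓝[>] 0) (𝓝 M') :=
    tendsto_nhdsWithin_of_tendsto_nhds <| by
      simpa using ((continuous_id.mul continuous_const).const_add M').tendsto (0 : ℝ)
  exact ge_of_tendsto hlim (eventually_nhdsWithin_of_forall fenced)

theorem stmt_18_general (ζ : ℝ → ℝ)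
    (hζmono : StrictMonoOn ζ (Set.Ici 0)) (hζ0 : ζ 0 = 0)
    (P T : ℝ) (hP : 0 ≤ P) (y y' : ℝ → ℝ)
    (hynonneg : ∀ t ∈ Set.Icc 0 T, 0 ≤ y t)
    (hderiv : ∀ t ∈ Set.Icc 0 T, HasDerivAt y (y' t) t)
    (hineq : ∀ t ∈ Set.Icc 0 T, y' t ≤ -(3 / 4) * ζ (y t) + (1 / 2) * ζ P) :
    (∀ t ∈ Set.Icc 0 T, P ≤ y t → y' t ≤ -(1 / 4) * ζ (y t)) ∧
      ∀ t ∈ Set.Icc 0 T, y t ≤ max (y 0) P := by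
  have decay : ∀ t ∈ Icc 0 T, P ≤ y t → y' t ≤ -(1 / 4) * ζ (y t) := fun t ht hPy => by
    linarith [hineq t ht, hζmono.monotoneOn hP (hynonneg t ht) hPy]
  refine ⟨decay, image_le_max_of_deriv_right_nonpos
    (fun t ht => (hderiv t ht).continuousAt.continuousWithinAt)
    (fun t ht => (hderiv t (Ico_subset_Icc_self ht)).hasDerivWithinAt) fun t ht hPy => ?_⟩
  have ht := Ico_subset_Icc_self ht
  have hζy : 0 ≤ ζ (y t) := hζ0 ▸ hζmono.monotoneOn self_mem_Ici (hynonneg t ht) (hynonneg t ht)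
  linarith [decay t ht hPy.le]

/-- Comparison argument at the heart of Theorem 1's proof: if
`y' ≤ -(3/4)ζ(y) + (1/2)ζ(P)` then `y' ≤ -(1/4)ζ(y)` whenever `y ≥ P`, and
consequently `y(t) ≤ max(y(0), P)`. -/
theorem stmt_18 (ζ : ℝ → ℝ) (hζcont : ContinuousOn ζ (Set.Ici 0))
    (hζmono : StrictMonoOn ζ (Set.Ici 0)) (hζ0 : ζ 0 = 0)
    (hζtop : Filter.Tendsto ζ Filter.atTop Filter.atTop)
    (P T : ℝ) (hP : 0 ≤ P) (hT : 0 < T) (y y' : ℝ → ℝ)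
    (hynonneg : ∀ t ∈ Set.Icc 0 T, 0 ≤ y t)
    (hderiv : ∀ t ∈ Set.Icc 0 T, HasDerivAt y (y' t) t)
    (hineq : ∀ t ∈ Set.Icc 0 T, y' t ≤ -(3 / 4) * ζ (y t) + (1 / 2) * ζ P) :
    (∀ t ∈ Set.Icc 0 T, P ≤ y t → y' t ≤ -(1 / 4) * ζ (y t)) ∧
      ∀ t ∈ Set.Icc 0 T, y t ≤ max (y 0) P :=
  stmt_18_general ζ hζmono hζ0 P T hP y y' hynonneg hderiv hineq
end
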